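/- arXiv:1504.06475 — 5 statements merged into one kernel-verified Lean document; each statement's English description precedes it below -/
import Mathlib

section
/- Let a* = A_{(k)} be the k-th smallest element of A and suppose x̄ > a*. If ā, a̲ satisfy Σ_{i ∈ I_{x̄}} δ⁻¹(v_i · a̲) ≤ k − |I_{x̄}| and Σ_{i ∈ I_{x̄}} δ⁻¹(v_i · ā) ≥ k, then a̲ ≤ a* ≤ ā. -/
open scoped Classical

/-- The rank of `x` in the multiset `A = ⊎_i { d_j / v_i }`. -/
noncomputable def rankA {n : ℕ} (d : ℕ → ℝ) (v : Fin n → ℝ) (x : ℝ) : ℕ :=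
  ∑ i : Fin n, Nat.card {j : ℕ | d j / v i ≤ x}

section Aux

variable {d : ℕ → ℝ} {δ δinv : ℝ → ℝ}

lemma countS_iff (hdmono : StrictMono d) (hdunb : ∀ M : ℝ, ∃ j : ℕ, M < d j) (y : ℝ) (j : ℕ) :
    d j ≤ y ↔ j < Nat.card {j : ℕ | d j ≤ y} := by
  have hfin : {j : ℕ | d j ≤ y}.Finite := by
    obtain ⟨m, hm⟩ := hdunb y
    refine Set.Finite.subset (Set.finite_Iio m) ?_
    intro j hj
    by_contra h
    simp only [Set.mem_Iio, not_lt] at h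
    exact absurd (le_trans (hdmono.monotone h) hj) (not_le.2 hm)
  constructor
  · intro hj
    have h1 : Set.Iic j ⊆ {j : ℕ | d j ≤ y} := fun m hm =>
      le_trans (hdmono.monotone hm) hj
    have := Nat.card_mono hfin h1
    simpa [Nat.card_Iic] using this
  · intro hj
    by_contra hcon
    have hsub : {j : ℕ | d j ≤ y} ⊆ Set.Iio j := by
      intro m hm
      by_contra h
      simp only [Set.mem_Iio, not_lt] at h
      exact hcon (le_trans (hdmono.monotone h) hm)
    have h2 := Nat.card_mono (Set.finite_Iio j) hsub
    have h3 : Nat.card (Set.Iio j) = j := by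
      rw [Nat.card_eq_card_toFinset]
      simp
    omega

lemma dinv_lt_count (hdmono : StrictMono d) (hdunb : ∀ M : ℝ, ∃ j : ℕ, M < d j)
    (hδm : StrictMonoOn δ (Set.Ici 0)) (hδd : ∀ j : ℕ, δ (j : ℝ) = d j)
    (hinv : ∀ x : ℝ, d 0 ≤ x → 0 ≤ δinv x ∧ δ (δinv x) = x)
    (hinv' : ∀ x : ℝ, x < d 0 → δinv x ∈ Set.Ico (-1 : ℝ) 0) (y : ℝ) :
    δinv y < (Nat.card {j : ℕ | d j ≤ y} : ℝ) := by
  rcases lt_or_ge y (d 0) with h | h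
  · exact lt_of_lt_of_le (hinv' y h).2 (Nat.cast_nonneg _)
  · obtain ⟨ht0, hδt⟩ := hinv y h
    have hj : d ⌊δinv y⌋₊ ≤ y := by
      have := hδm.monotoneOn (Set.mem_Ici.2 (Nat.cast_nonneg ⌊δinv y⌋₊))
        (Set.mem_Ici.2 ht0) (Nat.floor_le ht0)
      rwa [hδd, hδt] at this
    have h2 := (countS_iff hdmono hdunb y _).1 hj
    calc δinv y < ⌊δinv y⌋₊ + 1 := Nat.lt_floor_add_one _
      _ ≤ _ := by exact_mod_cast h2

lemma count_lt_dinv (hd0 : 0 ≤ d 0) (hdmono : StrictMono d)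
    (hdunb : ∀ M : ℝ, ∃ j : ℕ, M < d j)
    (hδm : StrictMonoOn δ (Set.Ici 0)) (hδd : ∀ j : ℕ, δ (j : ℝ) = d j)
    (hinv : ∀ x : ℝ, d 0 ≤ x → 0 ≤ δinv x ∧ δ (δinv x) = x)
    {y1 y2 : ℝ} (h12 : y1 < y2) (hc : 1 ≤ Nat.card {j : ℕ | d j ≤ y1}) :
    (Nat.card {j : ℕ | d j ≤ y1} : ℝ) < δinv y2 + 1 := by
  obtain ⟨m, hm⟩ : ∃ m, Nat.card {j : ℕ | d j ≤ y1} = m + 1 :=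
    ⟨Nat.card {j : ℕ | d j ≤ y1} - 1, by omega⟩
  have hdm : d m ≤ y1 := (countS_iff hdmono hdunb y1 m).2 (by omega)
  have hd0y2 : d 0 ≤ y2 := le_trans (hdmono.monotone (Nat.zero_le m)) (le_of_lt (lt_of_le_of_lt hdm h12))
  obtain ⟨ht0, hδt⟩ := hinv y2 hd0y2
  have hlt : (m : ℝ) < δinv y2 := by
    by_contra h
    push_neg at h
    have := hδm.monotoneOn (Set.mem_Ici.2 ht0) (Set.mem_Ici.2 (Nat.cast_nonneg m)) h
    rw [hδt, hδd] at this
    linarith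
  rw [hm]
  push_cast
  linarith

lemma count_le_dinv (hd0 : 0 ≤ d 0) (hdmono : StrictMono d)
    (hdunb : ∀ M : ℝ, ∃ j : ℕ, M < d j)
    (hδm : StrictMonoOn δ (Set.Ici 0)) (hδd : ∀ j : ℕ, δ (j : ℝ) = d j)
    (hinv : ∀ x : ℝ, d 0 ≤ x → 0 ≤ δinv x ∧ δ (δinv x) = x)
    (hinv' : ∀ x : ℝ, x < d 0 → δinv x ∈ Set.Ico (-1 : ℝ) 0)
    {y1 y2 : ℝ} (h12 : y1 < y2) :
    (Nat.card {j : ℕ | d j ≤ y1} : ℝ) ≤ δinv y2 + 1 := by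
  rcases Nat.eq_zero_or_pos (Nat.card {j : ℕ | d j ≤ y1}) with h | h
  · rw [h]
    rcases lt_or_ge y2 (d 0) with h2 | h2
    · have := (hinv' y2 h2).1
      push_cast
      linarith
    · have := (hinv y2 h2).1
      push_cast
      linarith
  · exact le_of_lt (count_lt_dinv hd0 hdmono hdunb hδm hδd hinv h12 h)

end Aux

lemma setdiv_eq {n : ℕ} (d : ℕ → ℝ) (v : Fin n → ℝ) (hv : ∀ i, 0 < v i) (i : Fin n) (x : ℝ) :
    {j : ℕ | d j / v i ≤ x} = {j : ℕ | d j ≤ v i * x} := by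
  ext j
  rw [Set.mem_setOf_eq, Set.mem_setOf_eq, div_le_iff₀ (hv i), mul_comm]

/-- If `Σ_{i ∈ I_{x̄}} δ⁻¹(v_i · a̲) ≤ k − |I_{x̄}|` and `Σ_{i ∈ I_{x̄}} δ⁻¹(v_i · ā) ≥ k`,
then `a̲ ≤ a* ≤ ā` where `a* = A_(k)` and `x̄ > a*`. -/
theorem astar_corridor
    {n : ℕ} (d : ℕ → ℝ) (δ δinv : ℝ → ℝ) (v : Fin n → ℝ)
    (k : ℕ) (astar xbar albar aubar : ℝ)
    (hd0 : 0 ≤ d 0) (hdmono : StrictMono d) (hdunb : ∀ M : ℝ, ∃ j : ℕ, M < d j)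
    (hv : ∀ i, 0 < v i) (hk : 1 ≤ k)
    (hδc : ContinuousOn δ (Set.Ici 0)) (hδm : StrictMonoOn δ (Set.Ici 0))
    (hδd : ∀ j : ℕ, δ (j : ℝ) = d j)
    (hinv : ∀ x : ℝ, d 0 ≤ x → 0 ≤ δinv x ∧ δ (δinv x) = x)
    (hinv' : ∀ x : ℝ, x < d 0 → δinv x ∈ Set.Ico (-1 : ℝ) 0)
    -- `astar` is the k-th smallest element of `A` (counting multiplicity)
    (hastar_mem : ∃ i : Fin n, ∃ j : ℕ, d j / v i = astar)
    (hastar_rank : k ≤ rankA d v astar)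
    (hastar_min : ∀ y : ℝ, y < astar → rankA d v y < k)
    (hxbar : astar < xbar)
    (hlow : (∑ i ∈ Finset.univ.filter (fun i => d 0 / xbar < v i), δinv (v i * albar))
              ≤ (k : ℝ) - ((Finset.univ.filter (fun i : Fin n => d 0 / xbar < v i)).card : ℝ))
    (hhigh : (k : ℝ) ≤
              ∑ i ∈ Finset.univ.filter (fun i => d 0 / xbar < v i), δinv (v i * aubar)) :
    albar ≤ astar ∧ astar ≤ aubar := by
  obtain ⟨i0, j0, hij0⟩ := hastar_mem
  have hdj0 : d j0 = v i0 * astar := by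
    rw [← hij0, mul_div_cancel₀ _ (ne_of_gt (hv i0))]
  have hd0j : d 0 ≤ d j0 := hdmono.monotone (Nat.zero_le _)
  have hastar0 : 0 ≤ astar := by
    rw [← hij0]
    exact div_nonneg (le_trans hd0 hd0j) (le_of_lt (hv i0))
  have hxpos : 0 < xbar := lt_of_le_of_lt hastar0 hxbar
  set I := Finset.univ.filter (fun i : Fin n => d 0 / xbar < v i) with hI
  have hi0I : i0 ∈ I := by
    rw [hI, Finset.mem_filter]
    refine ⟨Finset.mem_univ _, ?_⟩
    rw [div_lt_iff₀ hxpos]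
    calc d 0 ≤ d j0 := hd0j
      _ = v i0 * astar := hdj0
      _ < v i0 * xbar := mul_lt_mul_of_pos_left hxbar (hv i0)
  have hrank_cast : ∀ x : ℝ, (rankA d v x : ℝ) =
      ∑ i : Fin n, (Nat.card {j : ℕ | d j ≤ v i * x} : ℝ) := by
    intro x
    rw [rankA]
    push_cast
    exact Finset.sum_congr rfl fun i _ => by rw [setdiv_eq d v hv i x]
  constructor
  · -- albar ≤ astar
    by_contra h
    push_neg at h
    have hzero : ∀ i ∈ Finset.univ \ I, (Nat.card {j : ℕ | d j ≤ v i * astar} : ℝ) = 0 := by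
      intro i hi
      rw [Finset.mem_sdiff, hI, Finset.mem_filter] at hi
      have hvi : v i ≤ d 0 / xbar := le_of_not_gt (fun hc => hi.2 ⟨Finset.mem_univ _, hc⟩)
      have hvx : v i * xbar ≤ d 0 := by
        rw [← le_div_iff₀ hxpos]; exact hvi
      have hlt : v i * astar < d 0 :=
        lt_of_lt_of_le (mul_lt_mul_of_pos_left hxbar (hv i)) hvx
      have : {j : ℕ | d j ≤ v i * astar} = ∅ := by
        ext j
        simp only [Set.mem_setOf_eq, Set.mem_empty_iff_false, iff_false, not_le]
        exact lt_of_lt_of_le hlt (hdmono.monotone (Nat.zero_le j))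
      rw [this]
      simp
    have hsplit : (rankA d v astar : ℝ) =
        ∑ i ∈ I, (Nat.card {j : ℕ | d j ≤ v i * astar} : ℝ) := by
      rw [hrank_cast]
      rw [← Finset.sum_subset (Finset.subset_univ I)]
      intro i _ hiI
      exact hzero i (Finset.mem_sdiff.2 ⟨Finset.mem_univ _, hiI⟩)
    have hstrict : ∑ i ∈ I, (Nat.card {j : ℕ | d j ≤ v i * astar} : ℝ) <
        ∑ i ∈ I, (δinv (v i * albar) + 1) := by
      refine Finset.sum_lt_sum (fun i _ => ?_) ⟨i0, hi0I, ?_⟩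
      · exact count_le_dinv hd0 hdmono hdunb hδm hδd hinv hinv'
          (mul_lt_mul_of_pos_left h (hv i))
      · refine count_lt_dinv hd0 hdmono hdunb hδm hδd hinv
          (mul_lt_mul_of_pos_left h (hv i0)) ?_
        have hj0mem : d j0 ≤ v i0 * astar := le_of_eq hdj0
        have := (countS_iff hdmono hdunb (v i0 * astar) j0).1 hj0mem
        omega
    have hsum : ∑ i ∈ I, (δinv (v i * albar) + 1) =
        (∑ i ∈ I, δinv (v i * albar)) + (I.card : ℝ) := by
      rw [Finset.sum_add_distrib, Finset.sum_const, nsmul_eq_mul, mul_one]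
    have hfin : (rankA d v astar : ℝ) < k := by
      rw [hsplit]
      calc ∑ i ∈ I, (Nat.card {j : ℕ | d j ≤ v i * astar} : ℝ)
          < ∑ i ∈ I, (δinv (v i * albar) + 1) := hstrict
        _ = (∑ i ∈ I, δinv (v i * albar)) + (I.card : ℝ) := hsum
        _ ≤ k := by linarith [hlow]
    have : (k : ℝ) ≤ (rankA d v astar : ℝ) := by exact_mod_cast hastar_rank
    linarith
  · -- astar ≤ aubar
    by_contra h
    push_neg at h
    have hrk := hastar_min aubar h
    have key : (k : ℝ) ≤ (rankA d v aubar : ℝ) := by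
      rw [hrank_cast]
      calc (k : ℝ) ≤ ∑ i ∈ I, δinv (v i * aubar) := hhigh
        _ ≤ ∑ i ∈ I, (Nat.card {j : ℕ | d j ≤ v i * aubar} : ℝ) :=
            Finset.sum_le_sum fun i _ =>
              le_of_lt (dinv_lt_count hdmono hdunb hδm hδd hinv hinv' (v i * aubar))
        _ ≤ ∑ i : Fin n, (Nat.card {j : ℕ | d j ≤ v i * aubar} : ℝ) :=
            Finset.sum_le_sum_of_subset_of_nonneg (Finset.subset_univ I)
              (fun i _ _ => Nat.cast_nonneg _)
    have : (k : ℝ) > (rankA d v aubar : ℝ) := by exact_mod_cast hrk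
    linarith
end

section
/- Suppose αx + β̲ ≤ δ(x) ≤ αx + β̄ for all x ≥ 0 with α > 0, β̲ ∈ [0, α], β̄ ≥ 0. Given x̄ > a*, define a̲ = max{0, (αk − (α − β̲)|I_{x̄}|)/V_{x̄}} and ā = (αk + β̄|I_{x̄}|)/V_{x̄}, where V_{x̄} = Σ_{i ∈ I_{x̄}} v_i. Then a̲ ≤ a* ≤ ā. -/
open scoped Classical

lemma count_bounds (d : ℕ → ℝ) (δ δinv : ℝ → ℝ) (α βl βu : ℝ)
    (hdmono : StrictMono d) (hα : 0 < α) (hβl0 : 0 ≤ βl) (hβlα : βl ≤ α)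
    (hδm : StrictMonoOn δ (Set.Ici 0)) (hδd : ∀ j : ℕ, δ (j : ℝ) = d j)
    (hinv : ∀ x : ℝ, d 0 ≤ x → 0 ≤ δinv x ∧ δ (δinv x) = x)
    (hsand : ∀ x : ℝ, 0 ≤ x → α * x + βl ≤ δ x ∧ δ x ≤ α * x + βu)
    (c : ℝ) (hc : 0 ≤ c) :
    (c - βu) / α ≤ (Nat.card {j : ℕ | d j ≤ c} : ℝ) ∧
    (Nat.card {j : ℕ | d j ≤ c} : ℝ) ≤ (c - βl) / α + 1 := by
  have hδ0 : δ 0 = d 0 := by simpa using hδd 0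
  by_cases h : d 0 ≤ c
  · obtain ⟨ht0, htδ⟩ := hinv c h
    set t := δinv c with htdef
    have hset : {j : ℕ | d j ≤ c} = Set.Iic (Nat.floor t) := by
      ext j
      simp only [Set.mem_setOf_eq, Set.mem_Iic]
      rw [← hδd j, ← htδ,
        hδm.le_iff_le (Set.mem_Ici.mpr (Nat.cast_nonneg j)) (Set.mem_Ici.mpr ht0)]
      exact (Nat.le_floor_iff ht0).symm
    have hcard : (Nat.card {j : ℕ | d j ≤ c} : ℝ) = (Nat.floor t : ℝ) + 1 := by
      rw [hset, Nat.card_eq_card_toFinset, Set.toFinset_Iic, Nat.card_Iic]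
      push_cast; ring
    obtain ⟨hs1, hs2⟩ := hsand t ht0
    rw [htδ] at hs1 hs2
    constructor
    · rw [hcard, div_le_iff₀ hα]
      have h1 : (Nat.floor t : ℝ) + 1 > t := Nat.lt_floor_add_one t
      nlinarith
    · rw [hcard]
      have h1 : (Nat.floor t : ℝ) ≤ t := Nat.floor_le ht0
      have h2 : t ≤ (c - βl) / α := by rw [le_div_iff₀ hα]; linarith
      linarith
  · have hempty : {j : ℕ | d j ≤ c} = ∅ := by
      ext j
      simp only [Set.mem_setOf_eq, Set.mem_empty_iff_false, iff_false, not_le]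
      exact lt_of_lt_of_le (lt_of_not_ge h) (hdmono.monotone (Nat.zero_le j))
    rw [hempty]
    have hd0βu : d 0 ≤ βu := by
      have := (hsand 0 le_rfl).2
      rw [hδ0] at this; linarith
    have hcβu : c < βu := lt_of_lt_of_le (lt_of_not_ge h) hd0βu
    have hz : Nat.card (∅ : Set ℕ) = 0 := by simp
    rw [hz]
    constructor
    · simp only [Nat.cast_zero]
      apply div_nonpos_of_nonpos_of_nonneg <;> linarith
    · simp only [Nat.cast_zero]
      have h2 : (-1 : ℝ) ≤ (c - βl) / α := by
        rw [le_div_iff₀ hα]; nlinarith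
      linarith

/-- Candidate corridor for linearly sandwiched divisor sequences:
with `a̲ = max{0, (αk − (α−β̲)|I_{x̄}|)/V_{x̄}}` and `ā = (αk + β̄|I_{x̄}|)/V_{x̄}`
we have `a̲ ≤ a* ≤ ā`. -/
theorem candidate_set_linear_corridor
    {n : ℕ} (d : ℕ → ℝ) (δ δinv : ℝ → ℝ) (v : Fin n → ℝ)
    (α βl βu : ℝ) (k : ℕ) (astar xbar : ℝ)
    (hd0 : 0 ≤ d 0) (hdmono : StrictMono d) (hdunb : ∀ M : ℝ, ∃ j : ℕ, M < d j)
    (hv : ∀ i, 0 < v i) (hk : 1 ≤ k)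
    (hα : 0 < α) (hβl0 : 0 ≤ βl) (hβlα : βl ≤ α) (hβu : 0 ≤ βu)
    (hδc : ContinuousOn δ (Set.Ici 0)) (hδm : StrictMonoOn δ (Set.Ici 0))
    (hδd : ∀ j : ℕ, δ (j : ℝ) = d j)
    (hinv : ∀ x : ℝ, d 0 ≤ x → 0 ≤ δinv x ∧ δ (δinv x) = x)
    (hinv' : ∀ x : ℝ, x < d 0 → δinv x ∈ Set.Ico (-1 : ℝ) 0)
    (hsand : ∀ x : ℝ, 0 ≤ x → α * x + βl ≤ δ x ∧ δ x ≤ α * x + βu)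
    -- `astar` is the k-th smallest element of `A` (counting multiplicity)
    (hastar_mem : ∃ i : Fin n, ∃ j : ℕ, d j / v i = astar)
    (hastar_rank : k ≤ rankA d v astar)
    (hastar_min : ∀ y : ℝ, y < astar → rankA d v y < k)
    (hxbar : astar < xbar) :
    max 0 ((α * k - (α - βl) * ((Finset.univ.filter (fun i : Fin n => d 0 / xbar < v i)).card : ℝ))
            / (∑ i ∈ Finset.univ.filter (fun i => d 0 / xbar < v i), v i)) ≤ astar ∧
    astar ≤ (α * k + βu * ((Finset.univ.filter (fun i : Fin n => d 0 / xbar < v i)).card : ℝ))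
            / (∑ i ∈ Finset.univ.filter (fun i => d 0 / xbar < v i), v i) := by
  classical
  obtain ⟨i0, j0, hij0⟩ := hastar_mem
  set I : Finset (Fin n) := Finset.univ.filter (fun i : Fin n => d 0 / xbar < v i) with hI
  set V : ℝ := ∑ i ∈ I, v i with hV
  -- basic positivity facts
  have hastar0 : 0 ≤ astar := by
    rw [← hij0]
    exact div_nonneg (le_trans hd0 (hdmono.monotone (Nat.zero_le j0))) (hv i0).le
  have hxbar0 : 0 < xbar := lt_of_le_of_lt hastar0 hxbar
  have hi0I : i0 ∈ I := by
    rw [hI, Finset.mem_filter]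
    refine ⟨Finset.mem_univ _, ?_⟩
    rw [div_lt_iff₀ hxbar0]
    calc d 0 ≤ d j0 := hdmono.monotone (Nat.zero_le j0)
      _ = astar * v i0 := by
            rw [← hij0, div_mul_cancel₀ _ (ne_of_gt (hv i0))]
      _ < v i0 * xbar := by rw [mul_comm]; exact (mul_lt_mul_iff_right₀ (hv i0)).mpr hxbar
  have hVpos : 0 < V := Finset.sum_pos (fun i _ => hv i) ⟨i0, hi0I⟩
  -- counting bounds
  have key := count_bounds d δ δinv α βl βu hdmono hα hβl0 hβlα hδm hδd hinv hsand
  -- rewrite rank in terms of counts of d j ≤ v i * x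
  have hrank : ∀ x : ℝ, rankA d v x = ∑ i : Fin n, Nat.card {j : ℕ | d j ≤ v i * x} := by
    intro x
    unfold rankA
    apply Finset.sum_congr rfl
    intro i _
    have hseq : {j : ℕ | d j / v i ≤ x} = {j : ℕ | d j ≤ v i * x} := by
      ext j
      simp only [Set.mem_setOf_eq]
      rw [div_le_iff₀ (hv i), mul_comm]
    rw [hseq]
  constructor
  · -- lower bound
    apply max_le hastar0
    rw [div_le_iff₀ hVpos]
    -- k ≤ rank astar = ∑ over I (others zero) ≤ (V astar - βl |I|)/α + |I|
    have hzero : ∀ i : Fin n, i ∉ I → Nat.card {j : ℕ | d j ≤ v i * astar} = 0 := by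
      intro i hiI
      have hvi : v i ≤ d 0 / xbar := by
        by_contra hcon
        exact hiI (Finset.mem_filter.mpr ⟨Finset.mem_univ _, lt_of_not_ge hcon⟩)
      have hva : v i * astar < d 0 := by
        have h1 : v i * astar ≤ d 0 / xbar * astar :=
          mul_le_mul_of_nonneg_right hvi hastar0
        have h2 : d 0 / xbar * astar < d 0 := by
          by_cases hd0' : d 0 = 0
          · simp [hd0'] at hvi; linarith [hv i]
          · have hd0pos : 0 < d 0 := lt_of_le_of_ne hd0 (Ne.symm hd0')
            calc d 0 / xbar * astar < d 0 / xbar * xbar := by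
                  exact (mul_lt_mul_iff_right₀ (div_pos hd0pos hxbar0)).mpr hxbar
              _ = d 0 := by field_simp
        linarith
      have hemp : {j : ℕ | d j ≤ v i * astar} = (∅ : Set ℕ) := by
        apply Set.eq_empty_iff_forall_notMem.mpr
        intro j hj
        exact absurd hj (not_le.mpr (lt_of_lt_of_le hva (hdmono.monotone (Nat.zero_le j))))
      rw [hemp]; simp
    have hsum : rankA d v astar = ∑ i ∈ I, Nat.card {j : ℕ | d j ≤ v i * astar} := by
      rw [hrank]
      rw [← Finset.sum_filter_add_sum_filter_not Finset.univ (fun i => d 0 / xbar < v i)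
        (fun i => Nat.card {j : ℕ | d j ≤ v i * astar})]
      have hz2 : ∑ i ∈ Finset.univ.filter (fun i => ¬ d 0 / xbar < v i),
          Nat.card {j : ℕ | d j ≤ v i * astar} = 0 := by
        apply Finset.sum_eq_zero
        intro i hi
        apply hzero
        simp only [Finset.mem_filter, Finset.mem_univ, true_and] at hi
        simp only [hI, Finset.mem_filter, Finset.mem_univ, true_and]
        exact hi
      rw [hz2, add_zero]
    have hub : ∀ i ∈ I, (Nat.card {j : ℕ | d j ≤ v i * astar} : ℝ) ≤
        (v i * astar - βl) / α + 1 := fun i _ =>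
      (key (v i * astar) (mul_nonneg (hv i).le hastar0)).2
    have hkle : (k : ℝ) ≤ ∑ i ∈ I, ((v i * astar - βl) / α + 1) := by
      calc (k : ℝ) ≤ (rankA d v astar : ℝ) := by exact_mod_cast hastar_rank
        _ = ∑ i ∈ I, (Nat.card {j : ℕ | d j ≤ v i * astar} : ℝ) := by
            rw [hsum]; push_cast; ring
        _ ≤ _ := Finset.sum_le_sum hub
    have hexp : ∑ i ∈ I, ((v i * astar - βl) / α + 1) =
        (V * astar - βl * I.card) / α + I.card := by
      rw [Finset.sum_add_distrib, ← Finset.sum_div, Finset.sum_sub_distrib,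
        ← Finset.sum_mul]
      simp [hV, mul_comm]
    rw [hexp] at hkle
    rw [div_add' _ _ _ (ne_of_gt hα), le_div_iff₀ hα] at hkle
    nlinarith
  · -- upper bound
    rw [le_div_iff₀ hVpos]
    by_contra hcon
    push_neg at hcon
    -- pick y strictly between the bound and astar
    set aU : ℝ := (α * k + βu * I.card) / V with haU
    have haU0 : 0 ≤ aU := by
      apply div_nonneg _ hVpos.le
      have : (0:ℝ) ≤ α * k := by positivity
      have : (0:ℝ) ≤ βu * I.card := by positivity
      linarith
    have haUlt : aU < astar := by
      rw [haU, div_lt_iff₀ hVpos]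
      linarith [hcon]
    set y : ℝ := (aU + astar) / 2 with hy
    have hy0 : 0 ≤ y := by rw [hy]; linarith
    have hyU : aU < y := by rw [hy]; linarith
    have hylt : y < astar := by rw [hy]; linarith
    have hrky : rankA d v y < k := hastar_min y hylt
    have hlb : ∀ i ∈ I, (v i * y - βu) / α ≤
        (Nat.card {j : ℕ | d j ≤ v i * y} : ℝ) := fun i _ =>
      (key (v i * y) (mul_nonneg (hv i).le hy0)).1
    have hsumlb : (V * y - βu * I.card) / α ≤ (rankA d v y : ℝ) := by
      have h1 : ∑ i ∈ I, ((v i * y - βu) / α) ≤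
          ∑ i ∈ I, (Nat.card {j : ℕ | d j ≤ v i * y} : ℝ) :=
        Finset.sum_le_sum hlb
      have h2 : ∑ i ∈ I, ((v i * y - βu) / α) = (V * y - βu * I.card) / α := by
        rw [← Finset.sum_div, Finset.sum_sub_distrib, ← Finset.sum_mul]
        simp [hV, mul_comm]
      have h3 : ∑ i ∈ I, (Nat.card {j : ℕ | d j ≤ v i * y} : ℝ) ≤ (rankA d v y : ℝ) := by
        rw [hrank]
        push_cast
        apply Finset.sum_le_sum_of_subset_of_nonneg (Finset.subset_univ I)
        intro i _ _; positivity
      linarith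
    have hrkreal : (rankA d v y : ℝ) ≤ (k : ℝ) - 1 := by
      have : (rankA d v y : ℝ) + 1 ≤ (k : ℝ) := by exact_mod_cast hrky
      linarith
    -- conclude V * y < α * k + βu * |I|, contradicting aU < y
    have : V * y ≤ α * ((k:ℝ) - 1) + βu * I.card := by
      rw [div_le_iff₀ hα] at hsumlb
      nlinarith
    have hyle : y < aU := by
      rw [haU, lt_div_iff₀ hVpos]
      have hα1 : α * ((k:ℝ) - 1) < α * k := by nlinarith
      calc y * V = V * y := by ring
        _ ≤ α * ((k:ℝ)-1) + βu * I.card := this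
        _ < α * k + βu * I.card := by linarith
    linarith
end

section
/- Let v⁽¹⁾ = max v_i and x̄ = d_{k−1}/v⁽¹⁾ + ε for any ε > 0. Then the rank of d_{k−1}/v⁽¹⁾ in A is at least k, hence a* = A_{(k)} < x̄, and A_{(k)} equals the k-th smallest element of A ∩ (−∞, x̄). -/
open scoped Classical

/-- The rank of `x` in the truncated multiset `A ∩ (−∞, x̄)`. -/
noncomputable def rankTrunc {n : ℕ} (d : ℕ → ℝ) (v : Fin n → ℝ) (xbar x : ℝ) : ℕ :=
  ∑ i : Fin n, Nat.card {j : ℕ | d j / v i ≤ x ∧ d j / v i < xbar}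

lemma setFin {n : ℕ} (d : ℕ → ℝ) (v : Fin n → ℝ)
    (hdmono : StrictMono d) (hdunb : ∀ M : ℝ, ∃ j : ℕ, M < d j)
    (hv : ∀ i, 0 < v i) (i : Fin n) (x : ℝ) :
    {j : ℕ | d j / v i ≤ x}.Finite := by
  obtain ⟨J, hJ⟩ := hdunb (x * v i)
  apply Set.Finite.subset (Set.finite_Iio J)
  intro j hj
  simp only [Set.mem_setOf_eq] at hj
  have : d j ≤ x * v i := (div_le_iff₀ (hv i)).mp hj
  exact hdmono.lt_iff_lt.mp (lt_of_le_of_lt this hJ)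

/-- With `x̄ = d_{k−1}/v⁽¹⁾ + ε` (ε > 0): `r(d_{k−1}/v⁽¹⁾) ≥ k`, so `a* < x̄`
and `a*` is also the k-th smallest element of `A ∩ (−∞, x̄)`. -/
theorem cutoff_correct
    {n : ℕ} (d : ℕ → ℝ) (v : Fin n → ℝ) (k : ℕ) (astar ε : ℝ) (i1 : Fin n)
    (hd0 : 0 ≤ d 0) (hdmono : StrictMono d) (hdunb : ∀ M : ℝ, ∃ j : ℕ, M < d j)
    (hv : ∀ i, 0 < v i) (hk : 1 ≤ k) (hε : 0 < ε)
    (hmax : ∀ i, v i ≤ v i1)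
    -- `astar` is the k-th smallest element of `A` (counting multiplicity)
    (hastar_mem : ∃ i : Fin n, ∃ j : ℕ, d j / v i = astar)
    (hastar_rank : k ≤ rankA d v astar)
    (hastar_min : ∀ y : ℝ, y < astar → rankA d v y < k) :
    k ≤ rankA d v (d (k - 1) / v i1) ∧
    astar < d (k - 1) / v i1 + ε ∧
    k ≤ rankTrunc d v (d (k - 1) / v i1 + ε) astar ∧
    (∀ y : ℝ, y < astar → rankTrunc d v (d (k - 1) / v i1 + ε) y < k) := by
  set x0 := d (k - 1) / v i1 with hx0
  -- Part 1
  have h1 : k ≤ rankA d v x0 := by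
    have hsub : (↑(Finset.range k) : Set ℕ) ⊆ {j : ℕ | d j / v i1 ≤ x0} := by
      intro j hj
      simp only [Finset.coe_range, Set.mem_Iio] at hj
      simp only [Set.mem_setOf_eq]
      rw [hx0]
      have := hdmono.monotone (Nat.le_sub_one_of_lt hj)
      gcongr
      exact (hv i1).le
    have hkle : k ≤ Nat.card {j : ℕ | d j / v i1 ≤ x0} := by
      rw [Nat.card_coe_set_eq]
      calc k = (Finset.range k).card := (Finset.card_range k).symm
        _ = (↑(Finset.range k) : Set ℕ).ncard := (Set.ncard_coe_finset _).symm
        _ ≤ _ := Set.ncard_le_ncard hsub (setFin d v hdmono hdunb hv i1 x0)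
    calc k ≤ Nat.card {j : ℕ | d j / v i1 ≤ x0} := hkle
      _ ≤ rankA d v x0 := by
          rw [rankA]
          exact Finset.single_le_sum (f := fun i => Nat.card {j : ℕ | d j / v i ≤ x0}) (fun i _ => Nat.zero_le _) (Finset.mem_univ i1)
  -- Part 2
  have h2 : astar < x0 + ε := by
    by_contra h
    push_neg at h
    have hx0lt : x0 < astar := lt_of_lt_of_le (lt_add_of_pos_right x0 hε) h
    exact absurd h1 (not_le.mpr (hastar_min x0 hx0lt))
  -- Part 3
  have h3 : k ≤ rankTrunc d v (x0 + ε) astar := by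
    have : rankTrunc d v (x0 + ε) astar = rankA d v astar := by
      unfold rankTrunc rankA
      refine Finset.sum_congr rfl fun i _ => ?_
      have hset : {j : ℕ | d j / v i ≤ astar ∧ d j / v i < x0 + ε} = {j : ℕ | d j / v i ≤ astar} := by
        ext j
        simp only [Set.mem_setOf_eq]
        exact ⟨fun h => h.1, fun h => ⟨h, lt_of_le_of_lt h h2⟩⟩
      rw [hset]
    rw [this]; exact hastar_rank
  refine ⟨h1, h2, h3, fun y hy => ?_⟩
  -- Part 4
  have : rankTrunc d v (x0 + ε) y ≤ rankA d v y := by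
    refine Finset.sum_le_sum fun i _ => ?_
    rw [Nat.card_coe_set_eq, Nat.card_coe_set_eq]
    exact Set.ncard_le_ncard (fun j hj => hj.1) (setFin d v hdmono hdunb hv i y)
  exact lt_of_le_of_lt this (hastar_min y hy)
end

section
/- If the votes are v = (v_1,…,v_n) with all v_i > 0 and seat vector s ∈ ℕ₀ⁿ satisfies s_i = r(a*, A_i) for a* = A_{(k)} where r is the rank function, then Σ_{i=1}^n s_i ≥ k, and Σ_{i=1}^n |{ a ∈ A_i | a < a* }| < k; hence k − Σ_i |{a ∈ A_i | a < a*}| seats remain to be distributed among the parties tied at value a*. -/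
/-!
Each `A_i` has only finitely many elements below any bound, so only finitely many elements of `A`
lie strictly below `a*`. If `y < a*` is the largest of them (or any number below `a*` if there are
none), then the elements `< a*` are exactly the elements `≤ y`, and their number is `r(y, A) < k`
by the minimality of `a*`.
-/

open scoped Classical

theorem Monotone.finite_setOf_le {α : Type*} [Preorder α] {f : ℕ → α} (hf : Monotone f)
    (hunb : ∀ M, ∃ j, M < f j) (x : α) : {j | f j ≤ x}.Finite := by
  obtain ⟨j₀, hj₀⟩ := hunb x
  exact (Set.finite_Iio j₀).subset fun j hj =>
    lt_of_not_ge fun h => (hf h).not_gt (lt_of_le_of_lt hj hj₀)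

theorem exists_lt_setOf_lt_eq_setOf_le {ι β α : Type*} [Finite ι] [LinearOrder α] [NoMinOrder α]
    (f : ι → β → α) (hf : ∀ i x, {b | f i b ≤ x}.Finite) (a : α) :
    ∃ y < a, ∀ i, {b | f i b < a} = {b | f i b ≤ y} := by
  obtain ⟨c, hc⟩ := exists_lt a
  set S := insert c (⋃ i, f i '' {b | f i b < a})
  have hS : S.Finite :=
    (Set.finite_iUnion fun i => ((hf i a).subset fun _ hb => le_of_lt hb).image _).insert c
  obtain ⟨y, hyS, hmax⟩ := Set.exists_max_image S id hS (Set.insert_nonempty _ _)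
  have hya : y < a := by
    rcases hyS with rfl | hy
    · exact hc
    · obtain ⟨i, b, hb, rfl⟩ := Set.mem_iUnion.1 hy
      exact hb
  refine ⟨y, hya, fun i => Set.ext fun b => ⟨fun hb => hmax _ ?_, fun hb => lt_of_le_of_lt hb hya⟩⟩
  exact Set.mem_insert_of_mem _ (Set.mem_iUnion.2 ⟨i, b, hb, rfl⟩)

theorem finite_setOf_div_le {d : ℕ → ℝ} (hd : Monotone d) (hunb : ∀ M, ∃ j, M < d j)
    {c : ℝ} (hc : 0 < c) (x : ℝ) : {j | d j / c ≤ x}.Finite :=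
  (hd.div_const hc.le).finite_setOf_le
    (fun M => (hunb (M * c)).imp fun _ hj => (lt_div_iff₀ hc).2 hj) x

theorem seats_from_astar_general
    {n : ℕ} (d : ℕ → ℝ) (v : Fin n → ℝ) (k : ℕ) (astar : ℝ) (s : Fin n → ℕ)
    (hdmono : StrictMono d) (hdunb : ∀ M : ℝ, ∃ j : ℕ, M < d j)
    (hv : ∀ i, 0 < v i)
    -- `astar` is the k-th smallest element of `A` (counting multiplicity)
    (hastar_rank : k ≤ rankA d v astar)
    (hastar_min : ∀ y : ℝ, y < astar → rankA d v y < k)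
    (hs : ∀ i, s i = Nat.card {j : ℕ | d j / v i ≤ astar}) :
    k ≤ ∑ i : Fin n, s i ∧
    (∑ i : Fin n, Nat.card {j : ℕ | d j / v i < astar}) < k := by
  refine ⟨by simpa only [rankA, hs] using hastar_rank, ?_⟩
  obtain ⟨y, hy, hstrict⟩ := exists_lt_setOf_lt_eq_setOf_le (fun i j => d j / v i)
    (fun i => finite_setOf_div_le hdmono.monotone hdunb (hv i)) astar
  simpa only [rankA, hstrict] using hastar_min y hy

/-- If `s_i = r(a*, A_i)` for `a* = A_(k)`, then `Σ s_i ≥ k`, while the number of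
elements strictly below `a*` is `< k`; the difference is distributed among ties. -/
theorem seats_from_astar
    {n : ℕ} (d : ℕ → ℝ) (v : Fin n → ℝ) (k : ℕ) (astar : ℝ) (s : Fin n → ℕ)
    (hd0 : 0 ≤ d 0) (hdmono : StrictMono d) (hdunb : ∀ M : ℝ, ∃ j : ℕ, M < d j)
    (hv : ∀ i, 0 < v i) (hk : 1 ≤ k)
    -- `astar` is the k-th smallest element of `A` (counting multiplicity)
    (hastar_mem : ∃ i : Fin n, ∃ j : ℕ, d j / v i = astar)
    (hastar_rank : k ≤ rankA d v astar)
    (hastar_min : ∀ y : ℝ, y < astar → rankA d v y < k)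
    (hs : ∀ i, s i = Nat.card {j : ℕ | d j / v i ≤ astar}) :
    k ≤ ∑ i : Fin n, s i ∧
    (∑ i : Fin n, Nat.card {j : ℕ | d j / v i < astar}) < k :=
  seats_from_astar_general d v k astar s hdmono hdunb hv hastar_rank hastar_min hs
end

section
/- For any a < a̲ := max{0, (αk − (α−β̲)|I_{x̄}|)/V_{x̄}} (under the linear sandwich hypotheses), the rank satisfies r(a, A) < k; i.e., every such a is infeasible. -/
/-!
Since `d j ≥ α j + β̲`, voter `i` contributes at most `(a vᵢ - β̲)/α + 1` elements `≤ a` to `A`,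
and a voter with `vᵢ ≤ d₀ / x̄` contributes none below `x̄`. Summing over `I_{x̄}` at `a = a*`
gives `α k ≤ a* V_{x̄} + (α - β̲) |I_{x̄}|`, i.e. `a̲ ≤ a*`, and every `a < a*` has rank `< k`
by minimality of `a*`.
-/

open scoped Classical

open Finset

theorem natCard_le_add_one_of_forall_cast_le {s : Set ℕ} {t : ℝ} (ht : -1 ≤ t)
    (hs : ∀ j ∈ s, (j : ℝ) ≤ t) : (Nat.card s : ℝ) ≤ t + 1 := by
  have hsub : s ⊆ Set.Iio ⌊t + 1⌋₊ := fun j hj =>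
    Nat.lt_of_succ_le <| Nat.le_floor <| by push_cast; linarith [hs j hj]
  calc (Nat.card s : ℝ) ≤ Nat.card (Set.Iio ⌊t + 1⌋₊) := by
        exact_mod_cast Nat.card_mono (Set.finite_Iio _) hsub
    _ = ⌊t + 1⌋₊ := by simp
    _ ≤ t + 1 := Nat.floor_le (by linarith)

theorem mul_natCard_setOf_le_le {d : ℕ → ℝ} {α β y : ℝ} (hα : 0 < α) (hy : β - α ≤ y)
    (hd : ∀ j : ℕ, α * j + β ≤ d j) :
    α * Nat.card {j | d j ≤ y} ≤ y - β + α := by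
  have hcard : (Nat.card {j | d j ≤ y} : ℝ) ≤ (y - β) / α + 1 :=
    natCard_le_add_one_of_forall_cast_le (by rw [le_div_iff₀ hα]; linarith)
      fun j hj => by rw [le_div_iff₀ hα]; linarith [hd j, hj.out]
  calc α * Nat.card {j | d j ≤ y} ≤ α * ((y - β) / α + 1) := by gcongr
    _ = y - β + α := by field_simp

theorem setOf_div_le_eq_empty {d : ℕ → ℝ} (hd : Monotone d) {v a x : ℝ} (hv : 0 < v)
    (hx : 0 < x) (hvx : v ≤ d 0 / x) (hax : a < x) : {j | d j / v ≤ a} = ∅ := by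
  refine Set.eq_empty_of_forall_notMem fun j hj => ?_
  have hx0 : x ≤ d 0 / v := by rwa [le_div_iff₀ hv, mul_comm, ← le_div_iff₀ hx]
  have h0j : d 0 / v ≤ d j / v := div_le_div_of_nonneg_right (hd j.zero_le) hv.le
  exact absurd hj.out (by linarith)

section rank

variable {n : ℕ} {d : ℕ → ℝ} {v : Fin n → ℝ}

/-- The index set `I_x` of the paper. -/
noncomputable def activeVoters (d : ℕ → ℝ) (v : Fin n → ℝ) (x : ℝ) : Finset (Fin n) :=
  univ.filter fun i => d 0 / x < v i

theorem rankA_eq_sum_activeVoters (hd : Monotone d) (hv : ∀ i, 0 < v i) {a x : ℝ} (hx : 0 < x)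
    (hax : a < x) :
    rankA d v a = ∑ i ∈ activeVoters d v x, Nat.card {j | d j / v i ≤ a} := by
  refine (sum_subset (subset_univ _) fun i _ hi => ?_).symm
  rw [setOf_div_le_eq_empty hd (hv i) hx (by simpa [activeVoters] using hi) hax]
  simp

theorem mul_rankA_le (hd : Monotone d) (hv : ∀ i, 0 < v i) {α β a x : ℝ} (hα : 0 < α)
    (hβ : β ≤ α) (hdlin : ∀ j : ℕ, α * j + β ≤ d j) (ha : 0 ≤ a) (hax : a < x) :
    α * rankA d v a ≤
      a * ∑ i ∈ activeVoters d v x, v i + (α - β) * #(activeVoters d v x) := by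
  rw [rankA_eq_sum_activeVoters hd hv (ha.trans_lt hax) hax, Nat.cast_sum, mul_sum]
  calc ∑ i ∈ activeVoters d v x, α * Nat.card {j | d j / v i ≤ a}
      ≤ ∑ i ∈ activeVoters d v x, (a * v i - β + α) := sum_le_sum fun i _ => by
        simpa only [div_le_iff₀ (hv i)] using
          mul_natCard_setOf_le_le hα (by nlinarith [hv i]) hdlin
    _ = _ := by
      rw [sum_add_distrib, sum_sub_distrib, mul_sum]
      simp only [sum_const, nsmul_eq_mul]
      ring

end rank

theorem below_lower_bound_infeasible_general
    {n : ℕ} (d : ℕ → ℝ) (δ : ℝ → ℝ) (v : Fin n → ℝ)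
    (α βl βu : ℝ) (k : ℕ) (astar xbar : ℝ)
    (hd0 : 0 ≤ d 0) (hdmono : StrictMono d)
    (hv : ∀ i, 0 < v i)
    (hα : 0 < α) (hβlα : βl ≤ α)
    (hδd : ∀ j : ℕ, δ (j : ℝ) = d j)
    (hsand : ∀ x : ℝ, 0 ≤ x → α * x + βl ≤ δ x ∧ δ x ≤ α * x + βu)
    -- `astar` is the k-th smallest element of `A` (counting multiplicity)
    (hastar_mem : ∃ i : Fin n, ∃ j : ℕ, d j / v i = astar)
    (hastar_rank : k ≤ rankA d v astar)
    (hastar_min : ∀ y : ℝ, y < astar → rankA d v y < k)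
    (hxbar : astar < xbar) :
    ∀ a : ℝ,
      a < max 0 ((α * k - (α - βl) * ((Finset.univ.filter (fun i : Fin n => d 0 / xbar < v i)).card : ℝ))
            / (∑ i ∈ Finset.univ.filter (fun i => d 0 / xbar < v i), v i)) →
      rankA d v a < k := by
  intro a ha
  have hd : Monotone d := hdmono.monotone
  have hdlin (j : ℕ) : α * j + βl ≤ d j := hδd j ▸ (hsand j j.cast_nonneg).1
  have hastar0 : 0 ≤ astar := by
    obtain ⟨i, j, rfl⟩ := hastar_mem
    exact div_nonneg (hd0.trans (hd j.zero_le)) (hv i).le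
  have hbound : α * k ≤
      astar * ∑ i ∈ activeVoters d v xbar, v i + (α - βl) * #(activeVoters d v xbar) :=
    (mul_le_mul_of_nonneg_left (by exact_mod_cast hastar_rank) hα.le).trans
      (mul_rankA_le hd hv hα hβlα hdlin hastar0 hxbar)
  refine hastar_min a (ha.trans_le (max_le hastar0 ?_))
  exact div_le_of_le_mul₀ (sum_nonneg fun i _ => (hv i).le) hastar0 (sub_le_iff_le_add.2 hbound)

/-- Every `a < a̲ = max{0, (αk − (α−β̲)|I_{x̄}|)/V_{x̄}}` is infeasible: `r(a, A) < k`. -/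
theorem below_lower_bound_infeasible
    {n : ℕ} (d : ℕ → ℝ) (δ δinv : ℝ → ℝ) (v : Fin n → ℝ)
    (α βl βu : ℝ) (k : ℕ) (astar xbar : ℝ)
    (hd0 : 0 ≤ d 0) (hdmono : StrictMono d) (hdunb : ∀ M : ℝ, ∃ j : ℕ, M < d j)
    (hv : ∀ i, 0 < v i) (hk : 1 ≤ k)
    (hα : 0 < α) (hβl0 : 0 ≤ βl) (hβlα : βl ≤ α) (hβu : 0 ≤ βu)
    (hδc : ContinuousOn δ (Set.Ici 0)) (hδm : StrictMonoOn δ (Set.Ici 0))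
    (hδd : ∀ j : ℕ, δ (j : ℝ) = d j)
    (hinv : ∀ x : ℝ, d 0 ≤ x → 0 ≤ δinv x ∧ δ (δinv x) = x)
    (hinv' : ∀ x : ℝ, x < d 0 → δinv x ∈ Set.Ico (-1 : ℝ) 0)
    (hsand : ∀ x : ℝ, 0 ≤ x → α * x + βl ≤ δ x ∧ δ x ≤ α * x + βu)
    -- `astar` is the k-th smallest element of `A` (counting multiplicity)
    (hastar_mem : ∃ i : Fin n, ∃ j : ℕ, d j / v i = astar)
    (hastar_rank : k ≤ rankA d v astar)
    (hastar_min : ∀ y : ℝ, y < astar → rankA d v y < k)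
    (hxbar : astar < xbar) :
    ∀ a : ℝ,
      a < max 0 ((α * k - (α - βl) * ((Finset.univ.filter (fun i : Fin n => d 0 / xbar < v i)).card : ℝ))
            / (∑ i ∈ Finset.univ.filter (fun i => d 0 / xbar < v i), v i)) →
      rankA d v a < k :=
  below_lower_bound_infeasible_general d δ v α βl βu k astar xbar hd0 hdmono hv hα hβlα hδd hsand
    hastar_mem hastar_rank hastar_min hxbar
end
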